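/- Let ω_out, ω_in ∈ ℝ and suppose κ : 𝓡 → ℂ satisfies κ((R_Z(γ), t·e₃)·x) = exp(−i·(ω_out − ω_in·⟨e₃, d_x⟩)·t)·κ(x) for all γ, t ∈ ℝ and all rays x = (d_x, m_x) ∈ 𝓡. If ω_out ≠ ω_in, then κ(x) = 0 for every ray x with d_x = e₃; if ω_out ≠ −ω_in, then κ(x) = 0 for every ray x with d_x = −e₃. -/

import Mathlib

/-!
The rotation-free translations `(1, t e₃)` fix every ray whose direction is `±e₃`, so the
constraint reads `κ x = exp (-i (ω_out ∓ ω_in) t) κ x` for all `t`. Choosing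
`t = π / (ω_out ∓ ω_in)` makes the phase `-1`, whence `κ x = 0`.
-/

noncomputable section
open scoped InnerProductSpace

/-- ℝ³ with the Euclidean norm. -/
abbrev E3 : Type := EuclideanSpace ℝ (Fin 3)

/-- Elements of SE(3): a pair of a 3×3 matrix and a translation vector. -/
abbrev SE3 : Type := Matrix (Fin 3) (Fin 3) ℝ × E3

/-- Matrix-vector multiplication on ℝ³. -/
def mv (R : Matrix (Fin 3) (Fin 3) ℝ) (v : E3) : E3 := WithLp.toLp 2 (R.mulVec v)

/-- Cross product on ℝ³. -/
def cross3 (a b : E3) : E3 :=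
  WithLp.toLp 2 ![a 1 * b 2 - a 2 * b 1, a 2 * b 0 - a 0 * b 2, a 0 * b 1 - a 1 * b 0]

/-- `R` is a special orthogonal 3×3 matrix: `RᵀR = I` and `det R = 1`. -/
def isSO3 (R : Matrix (Fin 3) (Fin 3) ℝ) : Prop :=
  R.transpose * R = 1 ∧ R.det = 1

/-- `(d, m)` are Plücker coordinates of an oriented line: `d` is a unit
direction and `m` is a moment with `⟨d, m⟩ = 0`. -/
def isRay (d m : E3) : Prop := ‖d‖ = 1 ∧ ⟪d, m⟫_ℝ = 0

/-- The standard basis vector e₁. -/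
def e1 : E3 := !₂[1, 0, 0]

/-- The standard basis vector e₂. -/
def e2 : E3 := !₂[0, 1, 0]

/-- The standard basis vector e₃. -/
def e3 : E3 := !₂[0, 0, 1]

/-- Action of `(R, t) ∈ SE(3)` on Plücker coordinates:
`(R,t)·(d,m) = (Rd, Rm + t × (Rd))`. -/
def rayAct (R : Matrix (Fin 3) (Fin 3) ℝ) (t : E3) (d m : E3) : E3 × E3 :=
  (mv R d, mv R m + cross3 t (mv R d))

/-- Multiplication in SE(3): `(R₁,t₁)·(R₂,t₂) = (R₁R₂, t₁ + R₁t₂)`. -/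
def se3Mul (g₁ g₂ : SE3) : SE3 := (g₁.1 * g₂.1, g₁.2 + mv g₁.1 g₂.2)

/-- Inverse in SE(3) (for `g.1 ∈ SO(3)`): `(R,t)⁻¹ = (Rᵀ, -Rᵀt)`. -/
def se3Inv (g : SE3) : SE3 := (g.1.transpose, -(mv g.1.transpose g.2))

/-- Action of `g ∈ SE(3)` on the ray space. -/
def act (g : SE3) (x : E3 × E3) : E3 × E3 := rayAct g.1 g.2 x.1 x.2

/-- Action of `g = (R,t) ∈ SE(3)` on points of ℝ³: `g·p = Rp + t`. -/
def actPt (g : SE3) (p : E3) : E3 := mv g.1 p + g.2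

/-- The origin ray `η = (e₃, 0)`. -/
def eta : E3 × E3 := (e3, 0)

/-- The twist `h(g, x) = s(g·x)⁻¹ · g · s(x)` of a section `s`. -/
def twist (s : E3 × E3 → SE3) (g : SE3) (x : E3 × E3) : SE3 :=
  se3Mul (se3Inv (s (act g x))) (se3Mul g (s x))

/-- Rotation by γ about the z-axis. -/
def RZ (γ : ℝ) : Matrix (Fin 3) (Fin 3) ℝ :=
  !![Real.cos γ, -Real.sin γ, 0; Real.sin γ, Real.cos γ, 0; 0, 0, 1]

/-- Rotation by β about the y-axis. -/
def RY (β : ℝ) : Matrix (Fin 3) (Fin 3) ℝ :=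
  !![Real.cos β, 0, Real.sin β; 0, 1, 0; -Real.sin β, 0, Real.cos β]

/-- The underlying line of the ray with Plücker coordinates `(d, m)`:
`L(d,m) = {p : p × d = m}`. -/
def lineOf (d m : E3) : Set E3 := {p : E3 | cross3 p d = m}

/-- Infimum of the Euclidean distances between points of the line `L(d,m)`
and points of the z-axis. -/
def Dzaxis (d m : E3) : ℝ :=
  sInf {r : ℝ | ∃ p ∈ lineOf d m, ∃ s : ℝ, r = dist p (s • e3)}

/-- The z-coordinate `g(x) = e₃·(c - λ·d)` (with `c = d × m` and
`λ = ((e₁·c)(e₁·d) + (e₂·c)(e₂·d))/(1 - (e₃·d)²)`) of the point of `L(d,m)`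
closest to the z-axis (for `d ≠ ±e₃`). -/
def zfoot (d m : E3) : ℝ :=
  ⟪e3, cross3 d m - ((⟪e1, cross3 d m⟫_ℝ * ⟪e1, d⟫_ℝ + ⟪e2, cross3 d m⟫_ℝ * ⟪e2, d⟫_ℝ)
      / (1 - ⟪e3, d⟫_ℝ ^ 2)) • d⟫_ℝ

lemma RZ_zero : RZ 0 = 1 := by
  ext i j
  fin_cases i <;> fin_cases j <;> simp [RZ]

lemma mv_one (v : E3) : mv 1 v = v := by
  simp [mv]

lemma cross3_smul_smul_self (s c : ℝ) (v : E3) : cross3 (s • v) (c • v) = 0 := by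
  ext i
  fin_cases i <;> simp [cross3] <;> ring

lemma rayAct_one_of_cross3_eq_zero {t d : E3} (m : E3) (h : cross3 t d = 0) :
    rayAct 1 t d m = (d, m) := by
  simp [rayAct, mv_one, h]

lemma inner_e3_smul_e3 (c : ℝ) : ⟪e3, c • e3⟫_ℝ = c := by
  rw [inner_smul_right, PiLp.inner_apply]
  simp [e3, Fin.sum_univ_three]

lemma eq_zero_of_forall_exp_mul_eq {a : ℝ} (ha : a ≠ 0) {z : ℂ}
    (h : ∀ t : ℝ, Complex.exp (-Complex.I * a * t) * z = z) : z = 0 := by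
  have ha' : (a : ℂ) ≠ 0 := by exact_mod_cast ha
  have hphase : -Complex.I * a * ((Real.pi / a : ℝ) : ℂ) = -(Real.pi * Complex.I) := by
    push_cast
    field_simp
  have hz := h (Real.pi / a)
  rw [hphase, Complex.exp_neg, Complex.exp_pi_mul_I] at hz
  linear_combination -hz / 2

lemma eq_zero_of_direction_smul_e3 {ωout ωin : ℝ} {κ : E3 × E3 → ℂ}
    (hκ : ∀ γ t : ℝ, ∀ d m : E3, isRay d m →
      κ (rayAct (RZ γ) (t • e3) d m)
        = Complex.exp (-Complex.I * ((ωout : ℂ) - (ωin : ℂ) * (⟪e3, d⟫_ℝ : ℂ)) * (t : ℂ))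
            * κ (d, m))
    {c : ℝ} (hc : ωout ≠ ωin * c) {m : E3} (hray : isRay (c • e3) m) :
    κ (c • e3, m) = 0 := by
  refine eq_zero_of_forall_exp_mul_eq (a := ωout - ωin * c) (sub_ne_zero.mpr hc) fun t => ?_
  have h := hκ 0 t (c • e3) m hray
  rw [RZ_zero, rayAct_one_of_cross3_eq_zero m (cross3_smul_smul_self t c e3),
    inner_e3_smul_e3] at h
  push_cast
  exact h.symm

/-- a kernel satisfying the stabilizer-equivariance constraint
must vanish on rays with direction `e₃` when `ω_out ≠ ω_in`, and on rays with
direction `−e₃` when `ω_out ≠ −ω_in`. -/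
theorem statement14 (ωout ωin : ℝ) (κ : E3 × E3 → ℂ)
    (hκ : ∀ γ t : ℝ, ∀ d m : E3, isRay d m →
      κ (rayAct (RZ γ) (t • e3) d m)
        = Complex.exp (-Complex.I * ((ωout : ℂ) - (ωin : ℂ) * (⟪e3, d⟫_ℝ : ℂ)) * (t : ℂ))
            * κ (d, m)) :
    (ωout ≠ ωin → ∀ d m : E3, isRay d m → d = e3 → κ (d, m) = 0) ∧
    (ωout ≠ -ωin → ∀ d m : E3, isRay d m → d = -e3 → κ (d, m) = 0) := by
  constructor
  · rintro hω d m hray rfl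
    rw [← one_smul ℝ e3] at hray ⊢
    exact eq_zero_of_direction_smul_e3 hκ (by rwa [mul_one]) hray
  · rintro hω d m hray rfl
    rw [← neg_one_smul ℝ e3] at hray ⊢
    exact eq_zero_of_direction_smul_e3 hκ (by rwa [mul_neg_one]) hray

end
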